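/- arXiv:2208.09747 — 4 statements merged into one kernel-verified Lean document; each statement's English description precedes it below -/
import Mathlib

section
/- Let p be a multivariate polynomial in D variables with nonnegative coefficients and total degree at most d. If x, y ∈ ℝ^D with all coordinates positive satisfy |1 - y[e]/x[e]| ≤ μ for all e, where μ ≤ 1/(2d), then p(y) ≤ (1+μ)^d · p(x) ≤ (1 + 1.5·μ·d) · p(x). -/
lemma aux_pow_bound (μ : ℝ) (hμ0 : 0 ≤ μ) :
    ∀ k : ℕ, μ * k ≤ 1 / 2 → (1 + μ) ^ k ≤ 1 + μ * k + (μ * k) ^ 2 := by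
  intro k
  induction k with
  | zero => intro _; norm_num
  | succ k ih =>
    intro hk
    have hkc : (0:ℝ) ≤ (k:ℝ) := Nat.cast_nonneg k
    have hk' : μ * k ≤ 1 / 2 := by
      have : μ * k ≤ μ * (k + 1) := by nlinarith
      push_cast at hk
      linarith
    have h1 := ih hk'
    have hpos : (0:ℝ) ≤ 1 + μ := by linarith
    have h2 : (1 + μ) ^ (k + 1) = (1 + μ) ^ k * (1 + μ) := by ring
    rw [h2]
    push_cast
    push_cast at hk hk' h1
    nlinarith [mul_nonneg hμ0 hkc, sq_nonneg (μ * k), mul_nonneg (mul_nonneg hμ0 hμ0) hkc]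

theorem stmt_0 (D d : ℕ) (hd : 1 ≤ d) (p : MvPolynomial (Fin D) ℝ)
    (hcoeff : ∀ m, 0 ≤ p.coeff m) (hdeg : p.totalDegree ≤ d)
    (x y : Fin D → ℝ) (hx : ∀ e, 0 < x e) (hy : ∀ e, 0 < y e)
    (μ : ℝ) (hμ0 : 0 ≤ μ) (hμ : μ ≤ 1 / (2 * d))
    (hclose : ∀ e, |1 - y e / x e| ≤ μ) :
    MvPolynomial.eval y p ≤ (1 + μ) ^ d * MvPolynomial.eval x p ∧
      (1 + μ) ^ d * MvPolynomial.eval x p ≤ (1 + 1.5 * μ * d) * MvPolynomial.eval x p := by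
  have hμ1 : (1:ℝ) ≤ 1 + μ := by linarith
  have hdc : (1:ℝ) ≤ (d:ℝ) := by exact_mod_cast hd
  have h2d : (0:ℝ) < 2 * d := by linarith
  have hμd : μ * d ≤ 1 / 2 := by
    rw [le_div_iff₀ h2d] at hμ
    linarith
  have hyx : ∀ e, y e ≤ (1 + μ) * x e := by
    intro e
    have h := abs_le.mp (hclose e)
    have hxe := hx e
    have hle : y e / x e ≤ 1 + μ := by linarith [h.1]
    calc y e = y e / x e * x e := by field_simp
      _ ≤ (1 + μ) * x e := by nlinarith
  constructor
  · rw [MvPolynomial.eval_eq', MvPolynomial.eval_eq', Finset.mul_sum]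
    apply Finset.sum_le_sum
    intro m hm
    have hsum : ∑ e, m e ≤ d := by
      have h1 : (m.sum fun _ n => n) ≤ p.totalDegree := MvPolynomial.le_totalDegree hm
      have h2 : (m.sum fun _ n => n) = ∑ e, m e := Finsupp.sum_fintype m _ (fun _ => rfl)
      omega
    have hprod : ∏ e, y e ^ m e ≤ (1 + μ) ^ d * ∏ e, x e ^ m e := by
      calc ∏ e, y e ^ m e ≤ ∏ e, ((1 + μ) * x e) ^ m e := by
            apply Finset.prod_le_prod
            · intro e _; exact pow_nonneg (hy e).le _
            · intro e _; exact pow_le_pow_left₀ (hy e).le (hyx e) _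
        _ = (1 + μ) ^ (∑ e, m e) * ∏ e, x e ^ m e := by
            simp [mul_pow, Finset.prod_mul_distrib, Finset.prod_pow_eq_pow_sum]
        _ ≤ (1 + μ) ^ d * ∏ e, x e ^ m e := by
            apply mul_le_mul_of_nonneg_right
            · exact pow_le_pow_right₀ hμ1 hsum
            · exact Finset.prod_nonneg fun e _ => pow_nonneg (hx e).le _
    have hc := hcoeff m
    calc p.coeff m * ∏ e, y e ^ m e ≤ p.coeff m * ((1 + μ) ^ d * ∏ e, x e ^ m e) :=
          mul_le_mul_of_nonneg_left hprod hc
      _ = (1 + μ) ^ d * (p.coeff m * ∏ e, x e ^ m e) := by ring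
  · have hevalx : 0 ≤ MvPolynomial.eval x p := by
      rw [MvPolynomial.eval_eq']
      apply Finset.sum_nonneg
      intro m _
      have : (0:ℝ) ≤ ∏ e, x e ^ m e := Finset.prod_nonneg fun e _ => pow_nonneg (hx e).le _
      exact mul_nonneg (hcoeff m) this
    apply mul_le_mul_of_nonneg_right _ hevalx
    have := aux_pow_bound μ hμ0 d hμd
    nlinarith [this, hμd, mul_nonneg hμ0 (le_trans zero_le_one hdc)]
end

section
/- Let p be a multivariate polynomial in D variables with nonnegative coefficients and total degree at most d. If x, y ∈ ℝ^D with all coordinates positive satisfy |1 - y[e]/x[e]| ≤ μ for all e, where μ ≤ 1/(2d), then p(y) ≥ (1-μ)^d · p(x) ≥ (1 - μ·d) · p(x). -/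
theorem stmt_1 (D d : ℕ) (hd : 1 ≤ d) (p : MvPolynomial (Fin D) ℝ)
    (hcoeff : ∀ m, 0 ≤ p.coeff m) (hdeg : p.totalDegree ≤ d)
    (x y : Fin D → ℝ) (hx : ∀ e, 0 < x e) (hy : ∀ e, 0 < y e)
    (μ : ℝ) (hμ0 : 0 ≤ μ) (hμ : μ ≤ 1 / (2 * d))
    (hclose : ∀ e, |1 - y e / x e| ≤ μ) :
    (1 - μ) ^ d * MvPolynomial.eval x p ≤ MvPolynomial.eval y p ∧
      (1 - μ * d) * MvPolynomial.eval x p ≤ (1 - μ) ^ d * MvPolynomial.eval x p := by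
  have hd1 : (1:ℝ) ≤ d := by exact_mod_cast hd
  have hμ2 : μ ≤ 1 / 2 := by
    refine le_trans hμ ?_
    rw [div_le_div_iff₀ (by positivity) (by norm_num)]
    nlinarith
  have h1μ0 : 0 ≤ 1 - μ := by linarith
  have h1μ1 : 1 - μ ≤ 1 := by linarith
  have hxy : ∀ e, (1 - μ) * x e ≤ y e := by
    intro e
    have h := (abs_le.mp (hclose e)).2
    have hx' := hx e
    have h2 : 1 - μ ≤ y e / x e := by linarith
    calc (1 - μ) * x e ≤ (y e / x e) * x e := by
          exact mul_le_mul_of_nonneg_right h2 hx'.le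
      _ = y e := by field_simp
  have hpx : 0 ≤ MvPolynomial.eval x p := by
    rw [MvPolynomial.eval_eq']
    refine Finset.sum_nonneg fun m hm => ?_
    refine mul_nonneg (hcoeff m) (Finset.prod_nonneg fun i _ => ?_)
    exact pow_nonneg (hx i).le _
  constructor
  · rw [MvPolynomial.eval_eq', MvPolynomial.eval_eq', Finset.mul_sum]
    refine Finset.sum_le_sum fun m hm => ?_
    have hdm : ∑ i, m i ≤ d := by
      have h := MvPolynomial.le_totalDegree hm
      have hs : m.sum (fun _ e => e) = ∑ i, m i :=
        Finsupp.sum_fintype _ _ (fun _ => rfl)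
      omega
    have hprodx : 0 ≤ ∏ i, x i ^ m i :=
      Finset.prod_nonneg fun i _ => pow_nonneg (hx i).le _
    calc (1 - μ) ^ d * (p.coeff m * ∏ i, x i ^ m i)
        ≤ (1 - μ) ^ (∑ i, m i) * (p.coeff m * ∏ i, x i ^ m i) := by
          refine mul_le_mul_of_nonneg_right ?_ (mul_nonneg (hcoeff m) hprodx)
          exact pow_le_pow_of_le_one h1μ0 h1μ1 hdm
      _ = p.coeff m * ∏ i, ((1 - μ) * x i) ^ m i := by
          simp only [mul_pow]
          rw [Finset.prod_mul_distrib, Finset.prod_pow_eq_pow_sum]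
          ring
      _ ≤ p.coeff m * ∏ i, y i ^ m i := by
          refine mul_le_mul_of_nonneg_left ?_ (hcoeff m)
          refine Finset.prod_le_prod (fun i _ => ?_) (fun i _ => ?_)
          · exact pow_nonneg (mul_nonneg h1μ0 (hx i).le) _
          · exact pow_le_pow_left₀ (mul_nonneg h1μ0 (hx i).le) (hxy i) _
  · refine mul_le_mul_of_nonneg_right ?_ hpx
    have h := one_add_mul_le_pow (show (-2:ℝ) ≤ -μ by linarith) d
    have : 1 - μ * d = 1 + (d:ℝ) * (-μ) := by ring
    rw [this]
    calc 1 + (d:ℝ) * (-μ) = 1 + (d:ℝ) * (-μ) := rfl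
      _ ≤ (1 + -μ) ^ d := h
      _ = (1 - μ) ^ d := by ring_nf
end

section
/- Suppose f : ℝ_{>0}^D → ℝ_{≥0} can be written as a finite sum f(X) = Σ_{k=1}^m p_k(X)/q_k(X) where each p_k, q_k is a polynomial with positive coefficients of degree at most d ≥ 1. If X, Y ∈ ℝ_{>0}^D satisfy max_e |1 - Y[e]/X[e]| ≤ μ with μ·d ≤ 100/256, then |f(Y) - f(X)| ≤ 4·μ·d·f(X). -/
open MvPolynomial in
lemma aux_eval_nonneg {D : ℕ} (p : MvPolynomial (Fin D) ℝ)
    (hp : ∀ mon ∈ p.support, 0 < p.coeff mon)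
    (X : Fin D → ℝ) (hX : ∀ e, 0 ≤ X e) : 0 ≤ eval X p := by
  rw [MvPolynomial.eval_eq]
  exact Finset.sum_nonneg fun m hm => mul_nonneg (hp m hm).le
    (Finset.prod_nonneg fun i _ => pow_nonneg (hX i) _)

lemma aux_prod_scale {D : ℕ} (m : Fin D →₀ ℕ) (c : ℝ) (X : Fin D → ℝ) :
    ∏ i ∈ m.support, (c * X i) ^ m i
      = c ^ (m.sum fun _ e => e) * ∏ i ∈ m.support, X i ^ m i := by
  rw [Finsupp.sum, ← Finset.prod_pow_eq_pow_sum, ← Finset.prod_mul_distrib]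
  exact Finset.prod_congr rfl fun i _ => mul_pow _ _ _

open MvPolynomial in
lemma aux_eval_lower {D : ℕ} (d : ℕ) (p : MvPolynomial (Fin D) ℝ)
    (hp : ∀ mon ∈ p.support, 0 < p.coeff mon) (hdeg : p.totalDegree ≤ d)
    (X Y : Fin D → ℝ) (hX : ∀ e, 0 ≤ X e) (c : ℝ) (hc0 : 0 ≤ c) (hc1 : c ≤ 1)
    (hb : ∀ e, c * X e ≤ Y e) :
    c ^ d * eval X p ≤ eval Y p := by
  rw [MvPolynomial.eval_eq, MvPolynomial.eval_eq, Finset.mul_sum]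
  apply Finset.sum_le_sum
  intro m hm
  have hw : (m.sum fun _ e => e) ≤ d := le_trans (MvPolynomial.le_totalDegree hm) hdeg
  have hcoeff := hp m hm
  have hXp : (0:ℝ) ≤ ∏ i ∈ m.support, X i ^ m i :=
    Finset.prod_nonneg fun i _ => pow_nonneg (hX i) _
  have h1 : c ^ d ≤ c ^ (m.sum fun _ e => e) := pow_le_pow_of_le_one hc0 hc1 hw
  have h2 : ∏ i ∈ m.support, (c * X i) ^ m i ≤ ∏ i ∈ m.support, Y i ^ m i :=
    Finset.prod_le_prod (fun i _ => pow_nonneg (mul_nonneg hc0 (hX i)) _)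
      (fun i _ => pow_le_pow_left₀ (mul_nonneg hc0 (hX i)) (hb i) _)
  calc c ^ d * (p.coeff m * ∏ i ∈ m.support, X i ^ m i)
      ≤ c ^ (m.sum fun _ e => e) * (p.coeff m * ∏ i ∈ m.support, X i ^ m i) :=
        mul_le_mul_of_nonneg_right h1 (mul_nonneg hcoeff.le hXp)
    _ = p.coeff m * ∏ i ∈ m.support, (c * X i) ^ m i := by rw [aux_prod_scale]; ring
    _ ≤ p.coeff m * ∏ i ∈ m.support, Y i ^ m i := mul_le_mul_of_nonneg_left h2 hcoeff.le

open MvPolynomial in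
lemma aux_eval_upper {D : ℕ} (d : ℕ) (p : MvPolynomial (Fin D) ℝ)
    (hp : ∀ mon ∈ p.support, 0 < p.coeff mon) (hdeg : p.totalDegree ≤ d)
    (X Y : Fin D → ℝ) (hX : ∀ e, 0 ≤ X e) (hY : ∀ e, 0 ≤ Y e)
    (c : ℝ) (hc1 : 1 ≤ c) (hb : ∀ e, Y e ≤ c * X e) :
    eval Y p ≤ c ^ d * eval X p := by
  have hc0 : (0:ℝ) ≤ c := le_trans zero_le_one hc1
  rw [MvPolynomial.eval_eq, MvPolynomial.eval_eq, Finset.mul_sum]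
  apply Finset.sum_le_sum
  intro m hm
  have hw : (m.sum fun _ e => e) ≤ d := le_trans (MvPolynomial.le_totalDegree hm) hdeg
  have hcoeff := hp m hm
  have hXp : (0:ℝ) ≤ ∏ i ∈ m.support, X i ^ m i :=
    Finset.prod_nonneg fun i _ => pow_nonneg (hX i) _
  have h1 : c ^ (m.sum fun _ e => e) ≤ c ^ d := pow_le_pow_right₀ hc1 hw
  have h2 : ∏ i ∈ m.support, Y i ^ m i ≤ ∏ i ∈ m.support, (c * X i) ^ m i :=
    Finset.prod_le_prod (fun i _ => pow_nonneg (hY i) _)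
      (fun i _ => pow_le_pow_left₀ (hY i) (hb i) _)
  calc p.coeff m * ∏ i ∈ m.support, Y i ^ m i
      ≤ p.coeff m * ∏ i ∈ m.support, (c * X i) ^ m i := mul_le_mul_of_nonneg_left h2 hcoeff.le
    _ = c ^ (m.sum fun _ e => e) * (p.coeff m * ∏ i ∈ m.support, X i ^ m i) := by
        rw [aux_prod_scale]; ring
    _ ≤ c ^ d * (p.coeff m * ∏ i ∈ m.support, X i ^ m i) :=
        mul_le_mul_of_nonneg_right h1 (mul_nonneg hcoeff.le hXp)

lemma aux_key (d : ℕ) (μ : ℝ) (h0 : 0 ≤ μ) (h1 : μ * d < 1) :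
    (1+μ)^d * (1 - μ*d) ≤ (1-μ)^d * (1 + μ*d) := by
  induction d with
  | zero => simp
  | succ n ih =>
    have hbn : (0:ℝ) ≤ μ * n := mul_nonneg h0 (Nat.cast_nonneg n)
    push_cast at h1 ⊢
    have hn1 : μ * n < 1 := by nlinarith
    have hμlt1 : μ < 1 := by nlinarith
    have IH := ih (by exact_mod_cast hn1)
    have hP : (0:ℝ) < (1-μ)^n := pow_pos (by linarith) n
    have hQ : (0:ℝ) < (1+μ)^n := pow_pos (by linarith) n
    set b := μ * (n:ℝ) with hb
    rw [pow_succ, pow_succ]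
    rcases le_or_gt (1 - b - μ) 0 with hc | hc
    · have hL : (1+μ)^n * (1+μ) * (1 - μ*(↑n+1)) ≤ 0 := by
        apply mul_nonpos_of_nonneg_of_nonpos (by positivity) (by nlinarith)
      have hR : (0:ℝ) ≤ (1-μ)^n * (1-μ) * (1 + μ*(↑n+1)) := by
        apply mul_nonneg (mul_nonneg hP.le (by linarith)) (by nlinarith)
      linarith
    · have hbu : 0 < 1 - b := by linarith
      have id1 : (1+μ)*(1-b-μ)*(1+b) ≤ (1-μ)*(1+b+μ)*(1-b) := by
        nlinarith [mul_nonneg (mul_nonneg h0 hbn) (add_nonneg h0 hbn)]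
      have step1 : ((1+μ)^n*(1-b)) * ((1+μ)*(1-b-μ)) ≤ ((1-μ)^n*(1+b)) * ((1+μ)*(1-b-μ)) :=
        mul_le_mul_of_nonneg_right IH (by positivity)
      have step2 : (1-μ)^n * ((1+μ)*(1-b-μ)*(1+b)) ≤ (1-μ)^n * ((1-μ)*(1+b+μ)*(1-b)) :=
        mul_le_mul_of_nonneg_left id1 hP.le
      have step3 : ((1+μ)^n*((1+μ)*(1-b-μ))) * (1-b) ≤ ((1-μ)^n*((1-μ)*(1+b+μ))) * (1-b) := by
        nlinarith [step1, step2]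
      have final := le_of_mul_le_mul_right step3 hbu
      have hgoal1 : μ*((n:ℝ)+1) = b + μ := by rw [hb]; ring
      rw [hgoal1]
      nlinarith [final]

theorem stmt_2 (D m d : ℕ) (hd : 1 ≤ d)
    (p q : Fin m → MvPolynomial (Fin D) ℝ)
    (hp : ∀ k mon, mon ∈ (p k).support → 0 < (p k).coeff mon)
    (hq : ∀ k mon, mon ∈ (q k).support → 0 < (q k).coeff mon)
    (hpdeg : ∀ k, (p k).totalDegree ≤ d) (hqdeg : ∀ k, (q k).totalDegree ≤ d)
    (X Y : Fin D → ℝ) (hX : ∀ e, 0 < X e) (hY : ∀ e, 0 < Y e)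
    (hqX : ∀ k, 0 < MvPolynomial.eval X (q k)) (hqY : ∀ k, 0 < MvPolynomial.eval Y (q k))
    (μ : ℝ) (hμ0 : 0 ≤ μ) (hμ : μ * d ≤ 100 / 256)
    (hclose : ∀ e, |1 - Y e / X e| ≤ μ) :
    |(∑ k, MvPolynomial.eval Y (p k) / MvPolynomial.eval Y (q k)) -
        (∑ k, MvPolynomial.eval X (p k) / MvPolynomial.eval X (q k))| ≤
      4 * μ * d * (∑ k, MvPolynomial.eval X (p k) / MvPolynomial.eval X (q k)) := by
  have hd1 : (1:ℝ) ≤ (d:ℝ) := by exact_mod_cast hd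
  have hμle : μ ≤ 100/256 := by nlinarith
  have hμ1 : μ < 1 := by linarith [hμle]
  set s : ℝ := μ * d with hs_def
  have hs0 : 0 ≤ s := mul_nonneg hμ0 (by positivity)
  have hs1 : s < 1 := lt_of_le_of_lt hμ (by norm_num)
  have hs12 : s ≤ 100/256 := hμ
  -- coordinate bounds
  have hlo : ∀ e, (1-μ) * X e ≤ Y e := by
    intro e
    have h := abs_le.mp (hclose e)
    have : 1 - μ ≤ Y e / X e := by linarith [h.2]
    exact (le_div_iff₀ (hX e)).mp this
  have hhi : ∀ e, Y e ≤ (1+μ) * X e := by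
    intro e
    have h := abs_le.mp (hclose e)
    have : Y e / X e ≤ 1 + μ := by linarith [h.1]
    exact (div_le_iff₀ (hX e)).mp this
  have hXnn : ∀ e, 0 ≤ X e := fun e => (hX e).le
  have hYnn : ∀ e, 0 ≤ Y e := fun e => (hY e).le
  have hμa : (0:ℝ) ≤ 1 - μ := by linarith
  have hμb : (1:ℝ) ≤ 1 + μ := by linarith
  -- eval bounds
  have hpY_le : ∀ k, MvPolynomial.eval Y (p k) ≤ (1+μ)^d * MvPolynomial.eval X (p k) :=
    fun k => aux_eval_upper d (p k) (hp k) (hpdeg k) X Y hXnn hYnn (1+μ) hμb hhi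
  have hpY_ge : ∀ k, (1-μ)^d * MvPolynomial.eval X (p k) ≤ MvPolynomial.eval Y (p k) :=
    fun k => aux_eval_lower d (p k) (hp k) (hpdeg k) X Y hXnn (1-μ) hμa (by linarith) hlo
  have hqY_le : ∀ k, MvPolynomial.eval Y (q k) ≤ (1+μ)^d * MvPolynomial.eval X (q k) :=
    fun k => aux_eval_upper d (q k) (hq k) (hqdeg k) X Y hXnn hYnn (1+μ) hμb hhi
  have hqY_ge : ∀ k, (1-μ)^d * MvPolynomial.eval X (q k) ≤ MvPolynomial.eval Y (q k) :=
    fun k => aux_eval_lower d (q k) (hq k) (hqdeg k) X Y hXnn (1-μ) hμa (by linarith) hlo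
  have hpXnn : ∀ k, 0 ≤ MvPolynomial.eval X (p k) :=
    fun k => aux_eval_nonneg (p k) (hp k) X hXnn
  have hpYnn : ∀ k, 0 ≤ MvPolynomial.eval Y (p k) :=
    fun k => aux_eval_nonneg (p k) (hp k) Y hYnn
  have hPm : (0:ℝ) < (1-μ)^d := pow_pos (by linarith) d
  have hPp : (0:ℝ) < (1+μ)^d := pow_pos (by linarith) d
  set A : ℝ := ∑ k, MvPolynomial.eval Y (p k) / MvPolynomial.eval Y (q k) with hA_def
  set B : ℝ := ∑ k, MvPolynomial.eval X (p k) / MvPolynomial.eval X (q k) with hB_def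
  have hBk : ∀ k : Fin m, 0 ≤ MvPolynomial.eval X (p k) / MvPolynomial.eval X (q k) :=
    fun k => div_nonneg (hpXnn k) (hqX k).le
  have hB : 0 ≤ B := Finset.sum_nonneg fun k _ => hBk k
  -- ratio bounds
  have hkey := aux_key d μ hμ0 hs1
  have hAup : A ≤ ((1+μ)^d / (1-μ)^d) * B := by
    rw [hB_def, Finset.mul_sum]
    apply Finset.sum_le_sum
    intro k _
    have h1 : MvPolynomial.eval Y (p k) / MvPolynomial.eval Y (q k)
        ≤ ((1+μ)^d * MvPolynomial.eval X (p k)) / ((1-μ)^d * MvPolynomial.eval X (q k)) :=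
      div_le_div₀ (mul_nonneg hPp.le (hpXnn k)) (hpY_le k)
        (mul_pos hPm (hqX k)) (hqY_ge k)
    calc MvPolynomial.eval Y (p k) / MvPolynomial.eval Y (q k)
        ≤ ((1+μ)^d * MvPolynomial.eval X (p k)) / ((1-μ)^d * MvPolynomial.eval X (q k)) := h1
      _ = ((1+μ)^d / (1-μ)^d) * (MvPolynomial.eval X (p k) / MvPolynomial.eval X (q k)) :=
          (mul_div_mul_comm _ _ _ _)
  have hAlo : ((1-μ)^d / (1+μ)^d) * B ≤ A := by
    rw [hB_def, Finset.mul_sum]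
    apply Finset.sum_le_sum
    intro k _
    have h1 : ((1-μ)^d * MvPolynomial.eval X (p k)) / ((1+μ)^d * MvPolynomial.eval X (q k))
        ≤ MvPolynomial.eval Y (p k) / MvPolynomial.eval Y (q k) :=
      div_le_div₀ (hpYnn k) (hpY_ge k) (hqY k) (hqY_le k)
    calc ((1-μ)^d / (1+μ)^d) * (MvPolynomial.eval X (p k) / MvPolynomial.eval X (q k))
        = ((1-μ)^d * MvPolynomial.eval X (p k)) / ((1+μ)^d * MvPolynomial.eval X (q k)) :=
          (mul_div_mul_comm _ _ _ _).symm
      _ ≤ MvPolynomial.eval Y (p k) / MvPolynomial.eval Y (q k) := h1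
  have hR1 : (1+μ)^d / (1-μ)^d ≤ (1+s)/(1-s) := by
    rw [div_le_div_iff₀ hPm (by linarith)]
    nlinarith [hkey]
  have hR2 : (1-s)/(1+s) ≤ (1-μ)^d / (1+μ)^d := by
    rw [div_le_div_iff₀ (by linarith) hPp]
    nlinarith [hkey]
  have hAup2 : A * (1-s) ≤ (1+s) * B := by
    have h1 : A ≤ (1+s)/(1-s) * B :=
      le_trans hAup (mul_le_mul_of_nonneg_right hR1 hB)
    rw [div_mul_eq_mul_div] at h1
    exact (le_div_iff₀ (by linarith : (0:ℝ) < 1 - s)).mp h1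
  have hAlo2 : (1-s) * B ≤ A * (1+s) := by
    have h1 : (1-s)/(1+s) * B ≤ A :=
      le_trans (mul_le_mul_of_nonneg_right hR2 hB) hAlo
    rw [div_mul_eq_mul_div] at h1
    exact (div_le_iff₀ (by linarith : (0:ℝ) < 1 + s)).mp h1
  rw [abs_le]
  constructor
  · nlinarith [hAlo2, mul_nonneg hs0 hB, mul_nonneg (mul_nonneg hs0 hs0) hB]
  · nlinarith [hAup2, mul_nonneg hs0 hB, mul_nonneg (mul_nonneg hs0 hs0) hB]
end

section
/- Suppose the utility vector of player i satisfies u_i^{(t)}[σ] = Σ_{z ∈ Z} c_{σ,z} · Π_{i'≠i} x_{i'}^{(t)}[σ_{i'}(z)] where |c_{σ,z}| ≤ 1 and each x_{i'}^{(t)} has coordinates in [0,1]. Then ‖u_i^{(t+1)} − u_i^{(t)}‖_∞² ≤ (n−1)·|Z|²·Σ_{i'≠i} ‖x_{i'}^{(t+1)} − x_{i'}^{(t)}‖₁². -/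
lemma prod_diff_abs_le {ι : Type*} [DecidableEq ι] (s : Finset ι) (a b : ι → ℝ)
    (ha : ∀ j ∈ s, a j ∈ Set.Icc (0:ℝ) 1) (hb : ∀ j ∈ s, b j ∈ Set.Icc (0:ℝ) 1) :
    |∏ j ∈ s, a j - ∏ j ∈ s, b j| ≤ ∑ j ∈ s, |a j - b j| := by
  induction s using Finset.induction with
  | empty => simp
  | @insert j s hj ih =>
    rw [Finset.prod_insert hj, Finset.prod_insert hj, Finset.sum_insert hj]
    have ha' := fun k hk => ha k (Finset.mem_insert_of_mem hk)
    have hb' := fun k hk => hb k (Finset.mem_insert_of_mem hk)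
    have ih' := ih ha' hb'
    have haj := ha j (Finset.mem_insert_self j s)
    have hbj := hb j (Finset.mem_insert_self j s)
    have hpa : ∏ k ∈ s, a k ∈ Set.Icc (0:ℝ) 1 := by
      constructor
      · exact Finset.prod_nonneg fun k hk => (ha' k hk).1
      · exact Finset.prod_le_one (fun k hk => (ha' k hk).1) (fun k hk => (ha' k hk).2)
    have key : a j * ∏ k ∈ s, a k - b j * ∏ k ∈ s, b k
        = (a j - b j) * ∏ k ∈ s, a k + b j * (∏ k ∈ s, a k - ∏ k ∈ s, b k) := by ring
    rw [key]
    calc |(a j - b j) * ∏ k ∈ s, a k + b j * (∏ k ∈ s, a k - ∏ k ∈ s, b k)|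
        ≤ |(a j - b j) * ∏ k ∈ s, a k| + |b j * (∏ k ∈ s, a k - ∏ k ∈ s, b k)| :=
          abs_add_le _ _
      _ ≤ |a j - b j| * 1 + 1 * |∏ k ∈ s, a k - ∏ k ∈ s, b k| := by
          rw [abs_mul, abs_mul]
          gcongr
          · rw [abs_of_nonneg hpa.1]; exact hpa.2
          · rw [abs_of_nonneg hbj.1]; exact hbj.2
      _ ≤ |a j - b j| + ∑ k ∈ s, |a k - b k| := by
          rw [mul_one, one_mul]; gcongr

theorem stmt_15 (n : ℕ) (i : Fin n) {Z S : Type*} [Fintype Z] [Fintype S]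
    (dim : Fin n → ℕ) (c : S → Z → ℝ) (hc : ∀ s z, |c s z| ≤ 1)
    (x x' : (i' : Fin n) → Fin (dim i') → ℝ)
    (hx : ∀ i' e, x i' e ∈ Set.Icc (0 : ℝ) 1)
    (hx' : ∀ i' e, x' i' e ∈ Set.Icc (0 : ℝ) 1)
    (σm : (i' : Fin n) → Z → Fin (dim i'))
    (u u' : S → ℝ)
    (hu : ∀ s, u s = ∑ z, c s z * ∏ i' ∈ Finset.univ.erase i, x i' (σm i' z))
    (hu' : ∀ s, u' s = ∑ z, c s z * ∏ i' ∈ Finset.univ.erase i, x' i' (σm i' z)) :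
    ‖(fun s => u' s - u s : S → ℝ)‖ ^ 2 ≤
      (n - 1 : ℝ) * (Fintype.card Z : ℝ) ^ 2 *
        ∑ i' ∈ Finset.univ.erase i, (∑ e, |x' i' e - x i' e|) ^ 2 := by
  set L : Fin n → ℝ := fun i' => ∑ e, |x' i' e - x i' e| with hL
  have hLnn : ∀ i', 0 ≤ L i' := fun i' => Finset.sum_nonneg fun e _ => abs_nonneg _
  set C : ℝ := (Fintype.card Z : ℝ) * ∑ i' ∈ Finset.univ.erase i, L i' with hC
  have hCnn : 0 ≤ C := mul_nonneg (Nat.cast_nonneg _)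
    (Finset.sum_nonneg fun i' _ => hLnn i')
  have hbound : ‖(fun s => u' s - u s : S → ℝ)‖ ≤ C := by
    rw [pi_norm_le_iff_of_nonneg hCnn]
    intro s
    rw [Real.norm_eq_abs, hu, hu', ← Finset.sum_sub_distrib]
    calc |∑ z, (c s z * ∏ i' ∈ Finset.univ.erase i, x' i' (σm i' z)
            - c s z * ∏ i' ∈ Finset.univ.erase i, x i' (σm i' z))|
        ≤ ∑ z, |c s z * ∏ i' ∈ Finset.univ.erase i, x' i' (σm i' z)
            - c s z * ∏ i' ∈ Finset.univ.erase i, x i' (σm i' z)| :=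
          Finset.abs_sum_le_sum_abs _ _
      _ ≤ ∑ _z : Z, ∑ i' ∈ Finset.univ.erase i, L i' := by
          apply Finset.sum_le_sum
          intro z _
          rw [← mul_sub, abs_mul]
          calc |c s z| * |∏ i' ∈ Finset.univ.erase i, x' i' (σm i' z)
                - ∏ i' ∈ Finset.univ.erase i, x i' (σm i' z)|
              ≤ 1 * ∑ i' ∈ Finset.univ.erase i, |x' i' (σm i' z) - x i' (σm i' z)| :=
                mul_le_mul (hc s z)
                  (prod_diff_abs_le _ _ _ (fun j _ => hx' j _) (fun j _ => hx j _))
                  (abs_nonneg _) zero_le_one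
            _ ≤ ∑ i' ∈ Finset.univ.erase i, L i' := by
                rw [one_mul]
                apply Finset.sum_le_sum
                intro i' _
                exact Finset.single_le_sum (fun e _ => abs_nonneg (x' i' e - x i' e))
                  (Finset.mem_univ _)
      _ = C := by rw [hC, Finset.sum_const, Finset.card_univ, nsmul_eq_mul]
  have h1 : ‖(fun s => u' s - u s : S → ℝ)‖ ^ 2 ≤ C ^ 2 := by
    exact pow_le_pow_left₀ (norm_nonneg _) hbound 2
  refine h1.trans ?_
  rw [hC, mul_pow]
  have h2 : (∑ i' ∈ Finset.univ.erase i, L i') ^ 2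
      ≤ (n - 1 : ℝ) * ∑ i' ∈ Finset.univ.erase i, L i' ^ 2 := by
    have := sq_sum_le_card_mul_sum_sq (s := Finset.univ.erase i) (f := L)
    have hcard : ((Finset.univ.erase i).card : ℝ) = (n - 1 : ℝ) := by
      rw [Finset.card_erase_of_mem (Finset.mem_univ i), Finset.card_univ, Fintype.card_fin]
      have hn : 1 ≤ n := i.pos
      push_cast [hn]
      ring
    calc (∑ i' ∈ Finset.univ.erase i, L i') ^ 2
        ≤ ((Finset.univ.erase i).card : ℝ) * ∑ i' ∈ Finset.univ.erase i, L i' ^ 2 := by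
          exact_mod_cast this
      _ = (n - 1 : ℝ) * ∑ i' ∈ Finset.univ.erase i, L i' ^ 2 := by rw [hcard]
  calc (Fintype.card Z : ℝ) ^ 2 * (∑ i' ∈ Finset.univ.erase i, L i') ^ 2
      ≤ (Fintype.card Z : ℝ) ^ 2 * ((n - 1 : ℝ) * ∑ i' ∈ Finset.univ.erase i, L i' ^ 2) := by
        gcongr
    _ = (n - 1 : ℝ) * (Fintype.card Z : ℝ) ^ 2 * ∑ i' ∈ Finset.univ.erase i, L i' ^ 2 := by ring
end
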